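/- arXiv:1809.02003 — 5 statements merged into one kernel-verified Lean document; each statement's English description precedes it below -/
import Mathlib

section
/- For every τ in the Siegel upper half-space ℍ₂ and every z ∈ ℂ², the following nine linear relations among squares of theta functions hold, where θᵢ denotes the theta constant θᵢ(0): θ₆²θ₁(z)² − θ₁²θ₆(z)² + θ₇²θ₁₃(z)² − θ₂²θ₁₄(z)² = 0; θ₆²θ₂(z)² − θ₂²θ₆(z)² − θ₁²θ₁₄(z)² + θ₇²θ₁₆(z)² = 0; θ₆²θ₃(z)² − θ₃²θ₆(z)² + θ₉²θ₁₃(z)² − θ₄²θ₁₄(z)² = 0; θ₆²θ₄(z)² − θ₄²θ₆(z)² − θ₃²θ₁₄(z)² + θ₉²θ₁₆(z)² = 0; θ₆²θ₅(z)² − θ₅²θ₆(z)² + θ₈²θ₁₃(z)² − θ₁₀²θ₁₆(z)² = 0; θ₇²θ₆(z)² − θ₆²θ₇(z)² − θ₁²θ₁₃(z)² + θ₂²θ₁₆(z)² = 0; θ₈²θ₆(z)² − θ₆²θ₈(z)² − θ₅²θ₁₃(z)² + θ₁₀²θ₁₄(z)² = 0; θ₉²θ₆(z)² − θ₆²θ₉(z)²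 − θ₃²θ₁₃(z)² + θ₄²θ₁₆(z)² = 0; θ₁₀²θ₆(z)² − θ₆²θ₁₀(z)² + θ₈²θ₁₄(z)² − θ₅²θ₁₆(z)² = 0. -/
open scoped BigOperators

/-- Genus-two theta function with characteristic vectors `a`, `b`. -/
noncomputable def thetaFn (a b : Fin 2 → ℝ) (z : Fin 2 → ℂ) (τ : Matrix (Fin 2) (Fin 2) ℂ) : ℂ :=
  ∑' u : Fin 2 → ℤ,
    Complex.exp ((Real.pi : ℂ) * Complex.I *
      ((∑ i, ∑ j, ((u i : ℂ) + (a i : ℂ)) * τ i j * ((u j : ℂ) + (a j : ℂ))) +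
        2 * ∑ i, ((u i : ℂ) + (a i : ℂ)) * (z i + (b i : ℂ))))

/-- The sixteen theta characteristics `[(a₁,a₂);(b₁,b₂)]`, 0-indexed: entry `i` is θ_{i+1}. -/
def thetaChars : Fin 16 → (ℝ × ℝ) × (ℝ × ℝ) :=
  ![((0,0),(0,0)), ((0,0),(1,1)), ((0,0),(1,0)), ((0,0),(0,1)),
    ((1,0),(0,0)), ((1,0),(0,1)), ((0,1),(0,0)), ((1,1),(0,0)),
    ((0,1),(1,0)), ((1,1),(1,1)), ((0,1),(0,1)), ((0,1),(1,1)),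
    ((1,1),(0,1)), ((1,0),(1,0)), ((1,0),(1,1)), ((1,1),(1,0))]

/-- `th i z τ` is the theta function θ_{i+1}(z, τ). -/
noncomputable def th (i : Fin 16) (z : Fin 2 → ℂ) (τ : Matrix (Fin 2) (Fin 2) ℂ) : ℂ :=
  thetaFn ![(thetaChars i).1.1 / 2, (thetaChars i).1.2 / 2]
          ![(thetaChars i).2.1 / 2, (thetaChars i).2.2 / 2] z τ

/-- Membership in the Siegel upper half-space ℍ₂. -/
def IsSiegel (τ : Matrix (Fin 2) (Fin 2) ℂ) : Prop :=
  τ 0 1 = τ 1 0 ∧ 0 < (τ 1 1).im ∧ (τ 0 1).im ^ 2 < (τ 0 0).im * (τ 1 1).im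

/-!
Every square `θ[α/2; μ/2](w)²` is a combination of the four second-order theta functions
`Θ[β](w) = θ[β/2; 0](2w, 2τ)` with coefficients `±Θ[β'](0)`: in the product of two theta series
the substitution `(u, v) = (p + q + δ, p - q)`, with `δ` the parity of `u + v`, splits the double
sum into products of two series for `2τ` (Riemann's squaring formula). After this substitution
each of the nine relations is a polynomial identity in the eight numbers `Θ[β](w)`, `Θ[β](0)`.
-/

noncomputable def thetaTerm (a b : Fin 2 → ℝ) (z : Fin 2 → ℂ) (τ : Matrix (Fin 2) (Fin 2) ℂ)
    (u : Fin 2 → ℤ) : ℂ :=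
  Complex.exp ((Real.pi : ℂ) * Complex.I *
    ((∑ i, ∑ j, ((u i : ℂ) + (a i : ℂ)) * τ i j * ((u j : ℂ) + (a j : ℂ))) +
      2 * ∑ i, ((u i : ℂ) + (a i : ℂ)) * (z i + (b i : ℂ))))

lemma thetaFn_eq_tsum (a b : Fin 2 → ℝ) (z : Fin 2 → ℂ) (τ : Matrix (Fin 2) (Fin 2) ℂ) :
    thetaFn a b z τ = ∑' u, thetaTerm a b z τ u := rfl

lemma norm_thetaTerm (a b : Fin 2 → ℝ) (z : Fin 2 → ℂ) (τ : Matrix (Fin 2) (Fin 2) ℂ)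
    (u : Fin 2 → ℤ) :
    ‖thetaTerm a b z τ u‖ = Real.exp (-Real.pi *
      (((u 0 : ℝ) + a 0) ^ 2 * (τ 0 0).im
        + ((u 0 : ℝ) + a 0) * ((u 1 : ℝ) + a 1) * ((τ 0 1).im + (τ 1 0).im)
        + ((u 1 : ℝ) + a 1) ^ 2 * (τ 1 1).im
        + 2 * (((u 0 : ℝ) + a 0) * (z 0).im + ((u 1 : ℝ) + a 1) * (z 1).im))) := by
  rw [thetaTerm, Complex.norm_exp]
  congr 1
  simp only [Fin.sum_univ_two, Complex.mul_re, Complex.mul_im, Complex.add_re, Complex.add_im,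
    Complex.I_re, Complex.I_im, Complex.ofReal_re, Complex.ofReal_im, Complex.intCast_re,
    Complex.intCast_im, Complex.re_ofNat, Complex.im_ofNat]
  ring

lemma summable_exp_neg_pi_gaussian {c : ℝ} (hc : 0 < c) (α y : ℝ) :
    Summable fun n : ℤ =>
      Real.exp (-Real.pi * (c * ((n : ℝ) + α) ^ 2 + 2 * ((n : ℝ) + α) * y)) := by
  have hterm : Summable fun n : ℤ =>
      ‖jacobiTheta₂_term n ((c * α + y : ℝ) * Complex.I) (c * Complex.I)‖ :=
    summable_norm_iff.mpr <| (summable_jacobiTheta₂_term_iff _ _).mpr (by simpa using hc)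
  refine (hterm.mul_left (Real.exp (-Real.pi * (c * α ^ 2 + 2 * α * y)))).congr fun n => ?_
  rw [norm_jacobiTheta₂_term, ← Real.exp_add]
  congr 1
  simp only [Complex.mul_im, Complex.ofReal_re, Complex.ofReal_im, Complex.I_re, Complex.I_im]
  ring

lemma IsSiegel.exists_pos_le_quadForm {τ : Matrix (Fin 2) (Fin 2) ℂ} (hτ : IsSiegel τ) :
    ∃ c > 0, ∀ r s : ℝ, c * (r ^ 2 + s ^ 2) ≤
      (τ 0 0).im * r ^ 2 + 2 * (τ 0 1).im * r * s + (τ 1 1).im * s ^ 2 := by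
  obtain ⟨-, h11, hdet⟩ := hτ
  have h00 : 0 < (τ 0 0).im := by nlinarith [sq_nonneg (τ 0 1).im]
  have htr : 0 < (τ 0 0).im + (τ 1 1).im := by linarith
  -- `det / trace` is at most the smaller eigenvalue of `Im τ`
  refine ⟨((τ 0 0).im * (τ 1 1).im - (τ 0 1).im ^ 2) / ((τ 0 0).im + (τ 1 1).im),
    div_pos (by linarith) htr, fun r s => ?_⟩
  rw [div_mul_eq_mul_div, div_le_iff₀ htr]
  nlinarith [sq_nonneg ((τ 0 0).im * r + (τ 0 1).im * s),
    sq_nonneg ((τ 0 1).im * r + (τ 1 1).im * s)]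

lemma summable_thetaTerm {τ : Matrix (Fin 2) (Fin 2) ℂ} (hτ : IsSiegel τ) (a b : Fin 2 → ℝ)
    (z : Fin 2 → ℂ) : Summable (thetaTerm a b z τ) := by
  obtain ⟨c, hc, hquad⟩ := hτ.exists_pos_le_quadForm
  have hgauss := fun i : Fin 2 => summable_exp_neg_pi_gaussian hc (a i) (z i).im
  have hdom : Summable fun u : Fin 2 → ℤ =>
      Real.exp (-Real.pi * (c * ((u 0 : ℝ) + a 0) ^ 2 + 2 * ((u 0 : ℝ) + a 0) * (z 0).im)) *
      Real.exp (-Real.pi * (c * ((u 1 : ℝ) + a 1) ^ 2 + 2 * ((u 1 : ℝ) + a 1) * (z 1).im)) :=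
    (finTwoArrowEquiv ℤ).summable_iff.mpr <|
      (hgauss 0).mul_of_nonneg (hgauss 1) (fun _ => (Real.exp_pos _).le)
        fun _ => (Real.exp_pos _).le
  refine Summable.of_norm <| hdom.of_nonneg_of_le (fun _ => norm_nonneg _) fun u => ?_
  rw [norm_thetaTerm, ← Real.exp_add, Real.exp_le_exp, ← hτ.1]
  nlinarith [hquad ((u 0 : ℝ) + a 0) ((u 1 : ℝ) + a 1), Real.pi_pos]

lemma IsSiegel.two_mul {τ : Matrix (Fin 2) (Fin 2) ℂ} (hτ : IsSiegel τ) :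
    IsSiegel fun i j => 2 * τ i j := by
  obtain ⟨hsymm, h11, hdet⟩ := hτ
  refine ⟨by simp only [hsymm], ?_, ?_⟩ <;>
    simp only [Complex.mul_im, Complex.re_ofNat, Complex.im_ofNat, zero_mul, add_zero] <;>
    nlinarith

lemma thetaFn_add_intCast (a b : Fin 2 → ℝ) (z : Fin 2 → ℂ) (τ : Matrix (Fin 2) (Fin 2) ℂ)
    (n : Fin 2 → ℤ) :
    thetaFn (fun i => a i + n i) b z τ = thetaFn a b z τ := by
  rw [thetaFn_eq_tsum, thetaFn_eq_tsum, ← (Equiv.addRight n).tsum_eq (thetaTerm a b z τ)]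
  refine tsum_congr fun u => ?_
  simp only [thetaTerm, Equiv.coe_addRight, Fin.sum_univ_two, Pi.add_apply]
  push_cast
  ring_nf

/-- The second-order theta function `Θ[β](w) = θ[β/2; 0](2w, 2τ)`. -/
noncomputable def secondOrderTheta (τ : Matrix (Fin 2) (Fin 2) ℂ) (β : Fin 2 → Fin 2)
    (w : Fin 2 → ℂ) : ℂ :=
  thetaFn (fun i => ((β i : ℕ) : ℝ) / 2) 0 (fun i => 2 * w i) (fun i j => 2 * τ i j)

lemma thetaFn_half_add_half (τ : Matrix (Fin 2) (Fin 2) ℂ) (α δ : Fin 2 → Fin 2)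
    (w : Fin 2 → ℂ) :
    thetaFn (fun i => ((α i : ℕ) : ℝ) / 2 + ((δ i : ℕ) : ℝ) / 2) 0 (fun i => 2 * w i)
      (fun i j => 2 * τ i j) = secondOrderTheta τ (δ + α) w := by
  rw [secondOrderTheta, ← thetaFn_add_intCast (fun i => (((δ + α) i : ℕ) : ℝ) / 2) 0
    (fun i => 2 * w i) (fun i j => 2 * τ i j) fun i => ((δ i : ℕ) * (α i : ℕ) : ℤ)]
  congr 1
  funext i
  have hcarry : ∀ s t : Fin 2,
      (s : ℕ) + (t : ℕ) = ((s + t : Fin 2) : ℕ) + 2 * ((s : ℕ) * (t : ℕ)) := by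
    decide
  have hcarry_real : ((δ i : ℕ) : ℝ) + (α i : ℕ) =
      ((δ i + α i : Fin 2) : ℕ) + 2 * (((δ i : ℕ) : ℝ) * (α i : ℕ)) := by
    exact_mod_cast hcarry (δ i) (α i)
  simp only [Pi.add_apply]
  push_cast
  linarith

def addSubParityEquiv : Fin 2 × ℤ × ℤ ≃ ℤ × ℤ where
  toFun x := (x.2.1 + x.2.2 + (x.1 : ℕ), x.2.1 - x.2.2)
  invFun y := (if (y.1 + y.2) % 2 = 0 then 0 else 1,
    (y.1 + y.2 - (y.1 + y.2) % 2) / 2, (y.1 - y.2 - (y.1 + y.2) % 2) / 2)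
  left_inv := by
    rintro ⟨δ, p, q⟩
    fin_cases δ <;> refine Prod.ext ?_ (Prod.ext ?_ ?_) <;> dsimp only <;> (try split_ifs) <;>
      first | rfl | omega
  right_inv := by
    rintro ⟨u, v⟩
    refine Prod.ext ?_ ?_ <;> dsimp only <;> (try split_ifs) <;> omega

def thetaPairEquiv :
    (Fin 2 → Fin 2) × (Fin 2 → ℤ) × (Fin 2 → ℤ) ≃ (Fin 2 → ℤ) × (Fin 2 → ℤ) :=
  ((Equiv.refl _).prodCongr (Equiv.arrowProdEquivProdArrow (Fin 2) _ _).symm).trans <|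
    (Equiv.arrowProdEquivProdArrow (Fin 2) _ _).symm.trans <|
      (Equiv.piCongrRight fun _ => addSubParityEquiv).trans
        (Equiv.arrowProdEquivProdArrow (Fin 2) _ _)

lemma thetaPairEquiv_apply (δ : Fin 2 → Fin 2) (p q : Fin 2 → ℤ) :
    thetaPairEquiv (δ, p, q) = (fun i => p i + q i + ((δ i : ℕ) : ℤ), fun i => p i - q i) :=
  rfl

lemma thetaTerm_mul_thetaTerm_thetaPairEquiv (τ : Matrix (Fin 2) (Fin 2) ℂ)
    (α μ δ : Fin 2 → Fin 2) (w : Fin 2 → ℂ) (p q : Fin 2 → ℤ) :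
    thetaTerm (fun i => ((α i : ℕ) : ℝ) / 2) (fun i => ((μ i : ℕ) : ℝ) / 2) w τ
        (thetaPairEquiv (δ, p, q)).1 *
      thetaTerm (fun i => ((α i : ℕ) : ℝ) / 2) (fun i => ((μ i : ℕ) : ℝ) / 2) w τ
        (thetaPairEquiv (δ, p, q)).2 =
    (-1 : ℂ) ^ (∑ i, ((δ i : ℕ) + (α i : ℕ)) * (μ i : ℕ)) *
      (thetaTerm (fun i => ((α i : ℕ) : ℝ) / 2 + ((δ i : ℕ) : ℝ) / 2) 0 (fun i => 2 * w i)
          (fun i j => 2 * τ i j) p *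
        thetaTerm (fun i => ((δ i : ℕ) : ℝ) / 2) 0 (fun i => 2 * (0 : Fin 2 → ℂ) i)
          (fun i j => 2 * τ i j) q) := by
  rw [← Complex.exp_pi_mul_I, ← Complex.exp_nat_mul, thetaPairEquiv_apply]
  simp only [thetaTerm]
  rw [← Complex.exp_add, ← Complex.exp_add, ← Complex.exp_add, Complex.exp_eq_exp_iff_exists_int]
  refine ⟨p 0 * (μ 0 : ℕ) + p 1 * (μ 1 : ℕ), ?_⟩
  simp only [Fin.sum_univ_two, Pi.zero_apply]
  push_cast
  ring

theorem thetaFn_sq_eq_sum_secondOrderTheta {τ : Matrix (Fin 2) (Fin 2) ℂ} (hτ : IsSiegel τ)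
    (α μ : Fin 2 → Fin 2) (w : Fin 2 → ℂ) :
    thetaFn (fun i => ((α i : ℕ) : ℝ) / 2) (fun i => ((μ i : ℕ) : ℝ) / 2) w τ ^ 2 =
      ∑ δ : Fin 2 → Fin 2, (-1 : ℂ) ^ (∑ i, ((δ i : ℕ) + (α i : ℕ)) * (μ i : ℕ)) *
        (secondOrderTheta τ (δ + α) w * secondOrderTheta τ δ 0) := by
  set t := thetaTerm (fun i => ((α i : ℕ) : ℝ) / 2) (fun i => ((μ i : ℕ) : ℝ) / 2) w τ
  have ht : Summable fun u => ‖t u‖ := (summable_thetaTerm hτ _ _ _).norm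
  have hpair : Summable fun x => t (thetaPairEquiv x).1 * t (thetaPairEquiv x).2 :=
    thetaPairEquiv.summable_iff.mpr (summable_mul_of_summable_norm ht ht)
  rw [sq, thetaFn_eq_tsum, tsum_mul_tsum_of_summable_norm ht ht, ← thetaPairEquiv.tsum_eq,
    hpair.tsum_prod, tsum_fintype]
  refine Finset.sum_congr rfl fun δ _ => ?_
  rw [tsum_congr fun pq : (Fin 2 → ℤ) × (Fin 2 → ℤ) =>
      thetaTerm_mul_thetaTerm_thetaPairEquiv τ α μ δ w pq.1 pq.2, tsum_mul_left,
    ← tsum_mul_tsum_of_summable_norm (summable_thetaTerm hτ.two_mul _ _ _).norm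
      (summable_thetaTerm hτ.two_mul _ _ _).norm, ← thetaFn_half_add_half τ α δ w]
  rfl

lemma sum_fin_two_arrow_fin_two {M : Type*} [AddCommMonoid M] (f : (Fin 2 → Fin 2) → M) :
    ∑ δ, f δ = f ![0, 0] + f ![0, 1] + f ![1, 0] + f ![1, 1] := by
  rw [← (finTwoArrowEquiv (Fin 2)).symm.sum_comp f, Fintype.sum_prod_type]
  simp [Fin.sum_univ_two, finTwoArrowEquiv, add_assoc]

def thetaCharBits : Fin 16 → (Fin 2 → Fin 2) × (Fin 2 → Fin 2) :=
  ![(![0, 0], ![0, 0]), (![0, 0], ![1, 1]), (![0, 0], ![1, 0]), (![0, 0], ![0, 1]),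
    (![1, 0], ![0, 0]), (![1, 0], ![0, 1]), (![0, 1], ![0, 0]), (![1, 1], ![0, 0]),
    (![0, 1], ![1, 0]), (![1, 1], ![1, 1]), (![0, 1], ![0, 1]), (![0, 1], ![1, 1]),
    (![1, 1], ![0, 1]), (![1, 0], ![1, 0]), (![1, 0], ![1, 1]), (![1, 1], ![1, 0])]

lemma th_eq_thetaFn (i : Fin 16) (w : Fin 2 → ℂ) (τ : Matrix (Fin 2) (Fin 2) ℂ) :
    th i w τ = thetaFn (fun j => (((thetaCharBits i).1 j : ℕ) : ℝ) / 2)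
      (fun j => (((thetaCharBits i).2 j : ℕ) : ℝ) / 2) w τ := by
  unfold th
  congr 1 <;> funext j <;> fin_cases i <;> fin_cases j <;> simp [thetaChars, thetaCharBits]

lemma th_sq_eq_sum {τ : Matrix (Fin 2) (Fin 2) ℂ} (hτ : IsSiegel τ) (i : Fin 16)
    (w : Fin 2 → ℂ) :
    th i w τ ^ 2 = ∑ δ : Fin 2 → Fin 2,
      (-1 : ℂ) ^ (∑ j, ((δ j : ℕ) + ((thetaCharBits i).1 j : ℕ)) * ((thetaCharBits i).2 j : ℕ)) *
        (secondOrderTheta τ (δ + (thetaCharBits i).1) w * secondOrderTheta τ δ 0) := by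
  rw [th_eq_thetaFn, thetaFn_sq_eq_sum_secondOrderTheta hτ]

/-- The nine Mumford relations among squares of theta functions relating even and odd
theta functions (with θ-constant coefficients). -/
theorem mumford_relations_even_odd (τ : Matrix (Fin 2) (Fin 2) ℂ) (hτ : IsSiegel τ)
    (z : Fin 2 → ℂ) :
    th 5 0 τ ^ 2 * th 0 z τ ^ 2 - th 0 0 τ ^ 2 * th 5 z τ ^ 2
      + th 6 0 τ ^ 2 * th 12 z τ ^ 2 - th 1 0 τ ^ 2 * th 13 z τ ^ 2 = 0 ∧
    th 5 0 τ ^ 2 * th 1 z τ ^ 2 - th 1 0 τ ^ 2 * th 5 z τ ^ 2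
      - th 0 0 τ ^ 2 * th 13 z τ ^ 2 + th 6 0 τ ^ 2 * th 15 z τ ^ 2 = 0 ∧
    th 5 0 τ ^ 2 * th 2 z τ ^ 2 - th 2 0 τ ^ 2 * th 5 z τ ^ 2
      + th 8 0 τ ^ 2 * th 12 z τ ^ 2 - th 3 0 τ ^ 2 * th 13 z τ ^ 2 = 0 ∧
    th 5 0 τ ^ 2 * th 3 z τ ^ 2 - th 3 0 τ ^ 2 * th 5 z τ ^ 2
      - th 2 0 τ ^ 2 * th 13 z τ ^ 2 + th 8 0 τ ^ 2 * th 15 z τ ^ 2 = 0 ∧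
    th 5 0 τ ^ 2 * th 4 z τ ^ 2 - th 4 0 τ ^ 2 * th 5 z τ ^ 2
      + th 7 0 τ ^ 2 * th 12 z τ ^ 2 - th 9 0 τ ^ 2 * th 15 z τ ^ 2 = 0 ∧
    th 6 0 τ ^ 2 * th 5 z τ ^ 2 - th 5 0 τ ^ 2 * th 6 z τ ^ 2
      - th 0 0 τ ^ 2 * th 12 z τ ^ 2 + th 1 0 τ ^ 2 * th 15 z τ ^ 2 = 0 ∧
    th 7 0 τ ^ 2 * th 5 z τ ^ 2 - th 5 0 τ ^ 2 * th 7 z τ ^ 2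
      - th 4 0 τ ^ 2 * th 12 z τ ^ 2 + th 9 0 τ ^ 2 * th 13 z τ ^ 2 = 0 ∧
    th 8 0 τ ^ 2 * th 5 z τ ^ 2 - th 5 0 τ ^ 2 * th 8 z τ ^ 2
      - th 2 0 τ ^ 2 * th 12 z τ ^ 2 + th 3 0 τ ^ 2 * th 15 z τ ^ 2 = 0 ∧
    th 9 0 τ ^ 2 * th 5 z τ ^ 2 - th 5 0 τ ^ 2 * th 9 z τ ^ 2
      + th 7 0 τ ^ 2 * th 13 z τ ^ 2 - th 4 0 τ ^ 2 * th 15 z τ ^ 2 = 0 := by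
  have hFin2 : (1 + 1 : Fin 2) = 0 := rfl
  simp only [th_sq_eq_sum hτ, sum_fin_two_arrow_fin_two, thetaCharBits, Matrix.cons_val,
    Fin.sum_univ_two, Matrix.cons_add_cons, Matrix.empty_add_empty, add_zero, zero_add, hFin2,
    Fin.val_zero, Fin.val_one]
  norm_num
  refine ⟨?_, ?_, ?_, ?_, ?_, ?_, ?_, ?_, ?_⟩ <;> ring
end

section
/- Let λ'₁, λ'₂, λ'₃ be pairwise distinct complex numbers with λ'₁ ≠ 2 and λ'₁ ≠ −2. Define Λ'₁ = 2(2λ'₁ − λ'₂ − λ'₃)/(λ'₂ − λ'₃), Λ'₂ = Λ'₁ − 4(λ'₁ − λ'₂)(λ'₁ − λ'₃)/((λ'₁ + 2)(λ'₂ − λ'₃)), and Λ'₃ = Λ'₁ − 4(λ'₁ − λ'₂)(λ'₁ − λ'₃)/((λ'₁ − 2)(λ'₂ − λ'₃)). Then Λ'₁, Λ'₂, Λ'₃ are pairwise distinct, Λ'₁ ≠ 2, Λ'₁ ≠ −2, and the inverse relations hold: λ'₁ = 2(2Λ'₁ − Λ'₂ − Λ'₃)/(Λ'₂ − Λ'₃),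 λ'₂ − λ'₁ = −4(Λ'₁ − Λ'₂)(Λ'₁ − Λ'₃)/((Λ'₁ + 2)(Λ'₂ − Λ'₃)), and λ'₃ − λ'₁ = −4(Λ'₁ − Λ'₂)(Λ'₁ − Λ'₃)/((Λ'₁ − 2)(Λ'₂ − Λ'₃)). -/
/-!
In the coordinates `x = λ'₁`, `a = λ'₁ - λ'₂`, `b = λ'₁ - λ'₃` the isogenous moduli are
`X = 2(a + b)/(b - a)`, `A = 4ab/((x + 2)(b - a))`, `B = 4ab/((x - 2)(b - a))`. Then
`X + 2 = 4b/(b - a)`, `X - 2 = 4a/(b - a)` and `B - A = 16ab/((x + 2)(x - 2)(b - a))`, so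
substituting these into the same formulas for `(X, A, B)` returns `(x, a, b)`.
-/

namespace IsogenousModuli

variable {K : Type*} [Field K]

/-- The isogenous moduli `(Λ'₁, Λ'₁ - Λ'₂, Λ'₁ - Λ'₃)` as a function of
`(λ'₁, λ'₁ - λ'₂, λ'₁ - λ'₃)`. -/
def dual : K × K × K → K × K × K
  | (x, a, b) =>
    (2 * (a + b) / (b - a), 4 * a * b / ((x + 2) * (b - a)), 4 * a * b / ((x - 2) * (b - a)))

def Admissible (p : K × K × K) : Prop :=
  p.2.1 ≠ 0 ∧ p.2.2 ≠ 0 ∧ p.2.2 - p.2.1 ≠ 0 ∧ p.1 + 2 ≠ 0 ∧ p.1 - 2 ≠ 0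

theorem dual_mk (x a b : K) : dual (x, a, b) =
    (2 * (a + b) / (b - a), 4 * a * b / ((x + 2) * (b - a)), 4 * a * b / ((x - 2) * (b - a))) :=
  rfl

theorem dual_fst_add_two {x a b : K} (hba : b - a ≠ 0) :
    (dual (x, a, b)).1 + 2 = 4 * b / (b - a) := by
  rw [dual_mk]
  field_simp
  ring

theorem dual_fst_sub_two {x a b : K} (hba : b - a ≠ 0) :
    (dual (x, a, b)).1 - 2 = 4 * a / (b - a) := by
  rw [dual_mk]
  field_simp
  ring

theorem dual_snd_snd_sub_dual_snd_fst {x a b : K} (hxp : x + 2 ≠ 0) (hxm : x - 2 ≠ 0) :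
    (dual (x, a, b)).2.2 - (dual (x, a, b)).2.1 = 16 * a * b / ((x + 2) * (x - 2) * (b - a)) := by
  rw [dual_mk]
  rcases eq_or_ne (b - a) 0 with hba | hba
  · simp [hba]
  field_simp
  ring

theorem Admissible.dual (h2 : (2 : K) ≠ 0) {p : K × K × K} (hp : Admissible p) :
    Admissible (dual p) := by
  obtain ⟨x, a, b⟩ := p
  obtain ⟨ha, hb, hba, hxp, hxm⟩ := hp
  have h4 : (4 : K) ≠ 0 := by
    rw [show (4 : K) = 2 ^ 2 by norm_num]; exact pow_ne_zero 2 h2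
  have h16 : (16 : K) ≠ 0 := by
    rw [show (16 : K) = 2 ^ 4 by norm_num]; exact pow_ne_zero 4 h2
  refine ⟨?_, ?_, ?_, ?_, ?_⟩
  · rw [dual_mk]; positivity
  · rw [dual_mk]; positivity
  · rw [dual_snd_snd_sub_dual_snd_fst hxp hxm]; positivity
  · rw [dual_fst_add_two hba]; positivity
  · rw [dual_fst_sub_two hba]; positivity

theorem dual_dual (h2 : (2 : K) ≠ 0) {p : K × K × K} (hp : Admissible p) :
    dual (dual p) = p := by
  obtain ⟨x, a, b⟩ := p
  obtain ⟨ha, hb, hba, hxp, hxm⟩ : a ≠ 0 ∧ b ≠ 0 ∧ b - a ≠ 0 ∧ x + 2 ≠ 0 ∧ x - 2 ≠ 0 := hp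
  have h16 : (16 : K) ≠ 0 := by
    rw [show (16 : K) = 2 ^ 4 by norm_num]; exact pow_ne_zero 4 h2
  set q := dual (x, a, b) with hq
  rw [show q = (q.1, q.2.1, q.2.2) from rfl, dual_mk, dual_fst_add_two hba, dual_fst_sub_two hba,
    dual_snd_snd_sub_dual_snd_fst hxp hxm, hq, dual_mk]
  simp only [Prod.mk.injEq]
  refine ⟨?_, ?_, ?_⟩ <;> field_simp <;> ring

theorem admissible_mk_sub_sub_iff {x y z : K} :
    Admissible (x, x - y, x - z) ↔ (x ≠ y ∧ x ≠ z ∧ y ≠ z) ∧ x ≠ 2 ∧ x ≠ -2 := by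
  simp only [Admissible, sub_sub_sub_cancel_left, sub_ne_zero, ne_eq, ← eq_neg_iff_add_eq_zero]
  tauto

theorem dual_mk_sub_sub_eq_iff {x y z X Y Z : K} :
    dual (x, x - y, x - z) = (X, X - Y, X - Z) ↔
      X = 2 * (2 * x - y - z) / (y - z) ∧
      Y = X - 4 * (x - y) * (x - z) / ((x + 2) * (y - z)) ∧
      Z = X - 4 * (x - y) * (x - z) / ((x - 2) * (y - z)) := by
  rw [dual_mk, sub_sub_sub_cancel_left, show x - y + (x - z) = 2 * x - y - z by ring]
  simp only [Prod.mk.injEq]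
  refine and_congr eq_comm (and_congr ?_ ?_) <;> constructor <;> intro h <;> linear_combination h

end IsogenousModuli

/-- The symmetric relations between the symmetrized moduli λ'ᵢ of a genus-two curve and
the symmetrized moduli Λ'ᵢ of its (2,2)-isogenous curve are involutive. -/
theorem isogenous_moduli_symmetric (l1 l2 l3 L1 L2 L3 : ℂ)
    (h12 : l1 ≠ l2) (h13 : l1 ≠ l3) (h23 : l2 ≠ l3)
    (hp2 : l1 ≠ 2) (hm2 : l1 ≠ -2)
    (hL1 : L1 = 2 * (2 * l1 - l2 - l3) / (l2 - l3))
    (hL2 : L2 = L1 - 4 * (l1 - l2) * (l1 - l3) / ((l1 + 2) * (l2 - l3)))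
    (hL3 : L3 = L1 - 4 * (l1 - l2) * (l1 - l3) / ((l1 - 2) * (l2 - l3))) :
    (L1 ≠ L2 ∧ L1 ≠ L3 ∧ L2 ≠ L3) ∧ L1 ≠ 2 ∧ L1 ≠ -2 ∧
    l1 = 2 * (2 * L1 - L2 - L3) / (L2 - L3) ∧
    l2 - l1 = -(4 * (L1 - L2) * (L1 - L3)) / ((L1 + 2) * (L2 - L3)) ∧
    l3 - l1 = -(4 * (L1 - L2) * (L1 - L3)) / ((L1 - 2) * (L2 - L3)) := by
  open IsogenousModuli in
  have hp : Admissible (l1, l1 - l2, l1 - l3) :=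
    admissible_mk_sub_sub_iff.mpr ⟨⟨h12, h13, h23⟩, hp2, hm2⟩
  have hdual : dual (l1, l1 - l2, l1 - l3) = (L1, L1 - L2, L1 - L3) :=
    dual_mk_sub_sub_eq_iff.mpr ⟨hL1, hL2, hL3⟩
  obtain ⟨hne, hL1p2, hL1m2⟩ := admissible_mk_sub_sub_iff.mp (hdual ▸ hp.dual two_ne_zero)
  obtain ⟨hl1, hl2, hl3⟩ := dual_mk_sub_sub_eq_iff.mp (hdual ▸ dual_dual two_ne_zero hp)
  refine ⟨hne, hL1p2, hL1m2, hl1, ?_, ?_⟩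
  · linear_combination hl2
  · linear_combination hl3
end

section
/- Let w₀, x₀, y₀, z₀ be complex numbers with w₀²z₀² − x₀²y₀² ≠ 0, w₀²x₀² − y₀²z₀² ≠ 0, and w₀²y₀² − x₀²z₀² ≠ 0. Define A = (w₀⁴ − x₀⁴ − y₀⁴ + z₀⁴)/(w₀²z₀² − x₀²y₀²), B = (w₀⁴ + x₀⁴ − y₀⁴ − z₀⁴)/(w₀²x₀² − y₀²z₀²), C = (w₀⁴ − x₀⁴ + y₀⁴ − z₀⁴)/(w₀²y₀² − x₀²z₀²), and D = w₀x₀y₀z₀·∏_{ε,ε'∈{±1}}(w₀² + εx₀² + ε'y₀² + εε'z₀²) / ((w₀²z₀² − x₀²y₀²)(w₀²x₀² − y₀²z₀²)(w₀²y₀² − x₀²z₀²)). Then D² = A² + B² + C² + ABC − 4. -/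
/-! Put `a, b, c, d = w₀², x₀², y₀², z₀²`. Clearing the three denominators turns the claim into
one polynomial identity in `a, b, c, d`, in which the factor `(w₀x₀y₀z₀)²` of `D²` becomes
`abcd`. -/

theorem goepel_hudson_identity {R : Type*} [CommRing R] (a b c d : R) :
    a * b * c * d *
      ((a + b + c + d) * (a + b - c - d) * (a - b + c - d) * (a - b - c + d)) ^ 2 =
    (a ^ 2 - b ^ 2 - c ^ 2 + d ^ 2) ^ 2 * ((a * b - c * d) * (a * c - b * d)) ^ 2 +
    (a ^ 2 + b ^ 2 - c ^ 2 - d ^ 2) ^ 2 * ((a * d - b * c) * (a * c - b * d)) ^ 2 +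
    (a ^ 2 - b ^ 2 + c ^ 2 - d ^ 2) ^ 2 * ((a * d - b * c) * (a * b - c * d)) ^ 2 +
    (a ^ 2 - b ^ 2 - c ^ 2 + d ^ 2) * (a ^ 2 + b ^ 2 - c ^ 2 - d ^ 2) *
      (a ^ 2 - b ^ 2 + c ^ 2 - d ^ 2) *
      ((a * d - b * c) * (a * b - c * d) * (a * c - b * d)) -
    4 * ((a * d - b * c) * (a * b - c * d) * (a * c - b * d)) ^ 2 := by
  ring

theorem div_sq_eq_cayley_cubic_div {K : Type*} [Field K] {α β γ δ p q r : K}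
    (hp : p ≠ 0) (hq : q ≠ 0) (hr : r ≠ 0)
    (h : δ ^ 2 = α ^ 2 * (q * r) ^ 2 + β ^ 2 * (p * r) ^ 2 + γ ^ 2 * (p * q) ^ 2 +
      α * β * γ * (p * q * r) - 4 * (p * q * r) ^ 2) :
    (δ / (p * q * r)) ^ 2 =
      (α / p) ^ 2 + (β / q) ^ 2 + (γ / r) ^ 2 + α / p * (β / q) * (γ / r) - 4 := by
  field_simp
  linear_combination h

/-- The moduli parameters A, B, C, D of a Göpel–Hudson quartic with node
`[w₀ : x₀ : y₀ : z₀]` satisfy the defining constraint `D² = A² + B² + C² + ABC − 4`. -/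
theorem goepel_hudson_constraint (w0 x0 y0 z0 A B C D : ℂ)
    (h1 : w0 ^ 2 * z0 ^ 2 - x0 ^ 2 * y0 ^ 2 ≠ 0)
    (h2 : w0 ^ 2 * x0 ^ 2 - y0 ^ 2 * z0 ^ 2 ≠ 0)
    (h3 : w0 ^ 2 * y0 ^ 2 - x0 ^ 2 * z0 ^ 2 ≠ 0)
    (hA : A = (w0 ^ 4 - x0 ^ 4 - y0 ^ 4 + z0 ^ 4) / (w0 ^ 2 * z0 ^ 2 - x0 ^ 2 * y0 ^ 2))
    (hB : B = (w0 ^ 4 + x0 ^ 4 - y0 ^ 4 - z0 ^ 4) / (w0 ^ 2 * x0 ^ 2 - y0 ^ 2 * z0 ^ 2))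
    (hC : C = (w0 ^ 4 - x0 ^ 4 + y0 ^ 4 - z0 ^ 4) / (w0 ^ 2 * y0 ^ 2 - x0 ^ 2 * z0 ^ 2))
    (hD : D = w0 * x0 * y0 * z0 *
        ((w0 ^ 2 + x0 ^ 2 + y0 ^ 2 + z0 ^ 2) * (w0 ^ 2 + x0 ^ 2 - y0 ^ 2 - z0 ^ 2) *
         (w0 ^ 2 - x0 ^ 2 + y0 ^ 2 - z0 ^ 2) * (w0 ^ 2 - x0 ^ 2 - y0 ^ 2 + z0 ^ 2)) /
      ((w0 ^ 2 * z0 ^ 2 - x0 ^ 2 * y0 ^ 2) * (w0 ^ 2 * x0 ^ 2 - y0 ^ 2 * z0 ^ 2) *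
       (w0 ^ 2 * y0 ^ 2 - x0 ^ 2 * z0 ^ 2))) :
    D ^ 2 = A ^ 2 + B ^ 2 + C ^ 2 + A * B * C - 4 := by
  subst hA hB hC hD
  apply div_sq_eq_cayley_cubic_div h1 h2 h3
  linear_combination goepel_hudson_identity (w0 ^ 2) (x0 ^ 2) (y0 ^ 2) (z0 ^ 2)
end

section
/- Let Θ₁, Θ₂, Θ₃, Θ₄ be complex numbers, set t₁ = Θ₁²+Θ₂²+Θ₃²+Θ₄², t₂ = Θ₁²+Θ₂²−Θ₃²−Θ₄², t₃ = Θ₁²−Θ₂²−Θ₃²+Θ₄², t₄ = Θ₁²−Θ₂²+Θ₃²−Θ₄², t₈ = 2(Θ₁Θ₂+Θ₃Θ₄), t₁₀ = 2(Θ₁Θ₂−Θ₃Θ₄), and assume t₂, t₄, t₁₀ ≠ 0, Θ₁²Θ₂² − Θ₃²Θ₄² ≠ 0, Θ₁²Θ₃² − Θ₂²Θ₄² ≠ 0, Θ₁²Θ₄² − Θ₂²Θ₃² ≠ 0. Define the Rosenhain moduli λ₁ = t₁t₃/(t₂t₄), λ₂ = t₃t₈/(t₄t₁₀), λ₃ =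 t₁t₈/(t₂t₁₀), and assume λ₁ ≠ 1 and λ₂ ≠ λ₃. Define A = (Θ₁⁴ − Θ₂⁴ − Θ₃⁴ + Θ₄⁴)/(Θ₁²Θ₄² − Θ₂²Θ₃²), B = (Θ₁⁴ + Θ₂⁴ − Θ₃⁴ − Θ₄⁴)/(Θ₁²Θ₂² − Θ₃²Θ₄²), C = (Θ₁⁴ − Θ₂⁴ + Θ₃⁴ − Θ₄⁴)/(Θ₁²Θ₃² − Θ₂²Θ₄²), D = Θ₁Θ₂Θ₃Θ₄·∏_{ε,ε'∈{±1}}(Θ₁² + εΘ₂² + ε'Θ₃² + εε'Θ₄²)/((Θ₁²Θ₂² − Θ₃²Θ₄²)(Θ₁²Θ₃² − Θ₂²Θ₄²)(Θ₁²Θ₄² − Θ₂²Θ₃²)). Then A = 2(λ₁+1)/(λ₁−1), B = 2(λ₁λ₂ + λ₁λ₃ − 2λ₂λ₃ − 2λ₁ + λ₂ + λ₃)/((λ₂−λ₃)(λ₁−1)), C = 2(λ₃+λ₂)/(λ₃−λ₂), and D = 4(λ₁ − λ₂λ₃)/((λ₂−λ₃)(λ₁−1)). -/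
/-!
Everything is a rational function of the theta squares `tᵢ = θᵢ²`. On the Göpel–Hudson side the
numerators and denominators of `A, B, C, D` are, up to powers of two, `t₁t₃ ± t₂t₄`,
`t₁t₄ ± t₂t₃`, `2t₁t₂ - t₈t₁₀`, `t₈t₁₀` and `t₈² - t₁₀²`; for instance
`4 (Θ₁²Θ₄² - Θ₂²Θ₃²) = t₁t₃ - t₂t₄` and `16 Θ₁Θ₂Θ₃Θ₄ = t₈² - t₁₀²`. Clearing denominators in
Picard's formulas turns the right-hand sides into the same expressions: for `A`, `C`, `D`
identically, for `B` modulo the quartic Riemann relation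
`(t₄t₈ - t₃t₁₀)(t₄t₁₀ - t₃t₈) = (t₂t₃ - t₁t₄)(t₁t₃ - t₂t₄)` among the theta squares.
-/

namespace GoepelHudson

theorem theta_quartic_relation {R : Type*} [CommRing R] {T1 T2 T3 T4 t1 t2 t3 t4 t8 t10 : R}
    (ht1 : t1 = T1 ^ 2 + T2 ^ 2 + T3 ^ 2 + T4 ^ 2) (ht2 : t2 = T1 ^ 2 + T2 ^ 2 - T3 ^ 2 - T4 ^ 2)
    (ht3 : t3 = T1 ^ 2 - T2 ^ 2 - T3 ^ 2 + T4 ^ 2) (ht4 : t4 = T1 ^ 2 - T2 ^ 2 + T3 ^ 2 - T4 ^ 2)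
    (ht8 : t8 = 2 * (T1 * T2 + T3 * T4)) (ht10 : t10 = 2 * (T1 * T2 - T3 * T4)) :
    (t4 * t8 - t3 * t10) * (t4 * t10 - t3 * t8) = (t2 * t3 - t1 * t4) * (t1 * t3 - t2 * t4) := by
  subst_vars
  ring

section GoepelHudsonModuli

variable {K : Type*} [Field K] [CharZero K] {T1 T2 T3 T4 t1 t2 t3 t4 t8 t10 : K}

theorem goepelHudsonA_eq (ht1 : t1 = T1 ^ 2 + T2 ^ 2 + T3 ^ 2 + T4 ^ 2)
    (ht2 : t2 = T1 ^ 2 + T2 ^ 2 - T3 ^ 2 - T4 ^ 2) (ht3 : t3 = T1 ^ 2 - T2 ^ 2 - T3 ^ 2 + T4 ^ 2)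
    (ht4 : t4 = T1 ^ 2 - T2 ^ 2 + T3 ^ 2 - T4 ^ 2) :
    (T1 ^ 4 - T2 ^ 4 - T3 ^ 4 + T4 ^ 4) / (T1 ^ 2 * T4 ^ 2 - T2 ^ 2 * T3 ^ 2) =
      2 * (t1 * t3 + t2 * t4) / (t1 * t3 - t2 * t4) := by
  have hnum : T1 ^ 4 - T2 ^ 4 - T3 ^ 4 + T4 ^ 4 = (t1 * t3 + t2 * t4) / 2 := by subst_vars; ring
  have hden : T1 ^ 2 * T4 ^ 2 - T2 ^ 2 * T3 ^ 2 = (t1 * t3 - t2 * t4) / 4 := by subst_vars; ring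
  rw [hnum, hden]
  field_simp
  ring

theorem goepelHudsonB_eq (ht1 : t1 = T1 ^ 2 + T2 ^ 2 + T3 ^ 2 + T4 ^ 2)
    (ht2 : t2 = T1 ^ 2 + T2 ^ 2 - T3 ^ 2 - T4 ^ 2) (ht8 : t8 = 2 * (T1 * T2 + T3 * T4))
    (ht10 : t10 = 2 * (T1 * T2 - T3 * T4)) :
    (T1 ^ 4 + T2 ^ 4 - T3 ^ 4 - T4 ^ 4) / (T1 ^ 2 * T2 ^ 2 - T3 ^ 2 * T4 ^ 2) =
      2 * (2 * t1 * t2 - t8 * t10) / (t8 * t10) := by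
  have hnum : T1 ^ 4 + T2 ^ 4 - T3 ^ 4 - T4 ^ 4 = (2 * t1 * t2 - t8 * t10) / 2 := by
    subst_vars; ring
  have hden : T1 ^ 2 * T2 ^ 2 - T3 ^ 2 * T4 ^ 2 = t8 * t10 / 4 := by subst_vars; ring
  rw [hnum, hden]
  field_simp
  ring

theorem goepelHudsonC_eq (ht1 : t1 = T1 ^ 2 + T2 ^ 2 + T3 ^ 2 + T4 ^ 2)
    (ht2 : t2 = T1 ^ 2 + T2 ^ 2 - T3 ^ 2 - T4 ^ 2) (ht3 : t3 = T1 ^ 2 - T2 ^ 2 - T3 ^ 2 + T4 ^ 2)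
    (ht4 : t4 = T1 ^ 2 - T2 ^ 2 + T3 ^ 2 - T4 ^ 2) :
    (T1 ^ 4 - T2 ^ 4 + T3 ^ 4 - T4 ^ 4) / (T1 ^ 2 * T3 ^ 2 - T2 ^ 2 * T4 ^ 2) =
      2 * (t1 * t4 + t2 * t3) / (t1 * t4 - t2 * t3) := by
  have hnum : T1 ^ 4 - T2 ^ 4 + T3 ^ 4 - T4 ^ 4 = (t1 * t4 + t2 * t3) / 2 := by subst_vars; ring
  have hden : T1 ^ 2 * T3 ^ 2 - T2 ^ 2 * T4 ^ 2 = (t1 * t4 - t2 * t3) / 4 := by subst_vars; ring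
  rw [hnum, hden]
  field_simp
  ring

theorem goepelHudsonD_eq (ht1 : t1 = T1 ^ 2 + T2 ^ 2 + T3 ^ 2 + T4 ^ 2)
    (ht2 : t2 = T1 ^ 2 + T2 ^ 2 - T3 ^ 2 - T4 ^ 2) (ht3 : t3 = T1 ^ 2 - T2 ^ 2 - T3 ^ 2 + T4 ^ 2)
    (ht4 : t4 = T1 ^ 2 - T2 ^ 2 + T3 ^ 2 - T4 ^ 2) (ht8 : t8 = 2 * (T1 * T2 + T3 * T4))
    (ht10 : t10 = 2 * (T1 * T2 - T3 * T4)) :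
    T1 * T2 * T3 * T4 *
        ((T1 ^ 2 + T2 ^ 2 + T3 ^ 2 + T4 ^ 2) * (T1 ^ 2 + T2 ^ 2 - T3 ^ 2 - T4 ^ 2) *
         (T1 ^ 2 - T2 ^ 2 + T3 ^ 2 - T4 ^ 2) * (T1 ^ 2 - T2 ^ 2 - T3 ^ 2 + T4 ^ 2)) /
      ((T1 ^ 2 * T2 ^ 2 - T3 ^ 2 * T4 ^ 2) * (T1 ^ 2 * T3 ^ 2 - T2 ^ 2 * T4 ^ 2) *
       (T1 ^ 2 * T4 ^ 2 - T2 ^ 2 * T3 ^ 2)) =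
      4 * (t8 ^ 2 - t10 ^ 2) * (t1 * t2 * t3 * t4) /
        (t8 * t10 * (t1 * t4 - t2 * t3) * (t1 * t3 - t2 * t4)) := by
  have hprod : T1 * T2 * T3 * T4 = (t8 ^ 2 - t10 ^ 2) / 16 := by subst_vars; ring
  have hden1 : T1 ^ 2 * T2 ^ 2 - T3 ^ 2 * T4 ^ 2 = t8 * t10 / 4 := by subst_vars; ring
  have hden2 : T1 ^ 2 * T3 ^ 2 - T2 ^ 2 * T4 ^ 2 = (t1 * t4 - t2 * t3) / 4 := by subst_vars; ring
  have hden3 : T1 ^ 2 * T4 ^ 2 - T2 ^ 2 * T3 ^ 2 = (t1 * t3 - t2 * t4) / 4 := by subst_vars; ring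
  rw [hprod, hden1, hden2, hden3, ← ht1, ← ht2, ← ht3, ← ht4]
  field_simp
  ring

end GoepelHudsonModuli

section Rosenhain

variable {K : Type*} [Field K] {t1 t2 t3 t4 t8 t10 l1 l2 l3 : K}

theorem sub_ne_zero_of_rosenhain_ne_one (h2 : t2 ≠ 0) (h4 : t4 ≠ 0)
    (hl1 : l1 = t1 * t3 / (t2 * t4)) (hl1ne : l1 ≠ 1) : t1 * t3 - t2 * t4 ≠ 0 := by
  rintro h
  exact hl1ne (by rw [hl1, sub_eq_zero.mp h, div_self (mul_ne_zero h2 h4)])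

theorem ne_zero_and_sub_ne_zero_of_rosenhain_ne (h2 : t2 ≠ 0) (h4 : t4 ≠ 0) (h10 : t10 ≠ 0)
    (hl2 : l2 = t3 * t8 / (t4 * t10)) (hl3 : l3 = t1 * t8 / (t2 * t10)) (hl23 : l2 ≠ l3) :
    t8 ≠ 0 ∧ t1 * t4 - t2 * t3 ≠ 0 := by
  subst hl2 hl3
  refine ⟨fun h ↦ hl23 (by simp [h]), fun h ↦ hl23 ?_⟩
  rw [div_eq_div_iff (mul_ne_zero h4 h10) (mul_ne_zero h2 h10)]
  linear_combination -t8 * t10 * h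

theorem rosenhainA_eq (h2 : t2 ≠ 0) (h4 : t4 ≠ 0) (hl1 : l1 = t1 * t3 / (t2 * t4)) :
    2 * (l1 + 1) / (l1 - 1) = 2 * (t1 * t3 + t2 * t4) / (t1 * t3 - t2 * t4) := by
  subst hl1
  field_simp

theorem rosenhainB_eq (h2 : t2 ≠ 0) (h4 : t4 ≠ 0) (h8 : t8 ≠ 0) (h10 : t10 ≠ 0)
    (h13 : t1 * t3 - t2 * t4 ≠ 0) (h14 : t1 * t4 - t2 * t3 ≠ 0)
    (hrel : (t4 * t8 - t3 * t10) * (t4 * t10 - t3 * t8) =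
      (t2 * t3 - t1 * t4) * (t1 * t3 - t2 * t4))
    (hl1 : l1 = t1 * t3 / (t2 * t4)) (hl2 : l2 = t3 * t8 / (t4 * t10))
    (hl3 : l3 = t1 * t8 / (t2 * t10)) :
    2 * (l1 * l2 + l1 * l3 - 2 * l2 * l3 - 2 * l1 + l2 + l3) / ((l2 - l3) * (l1 - 1)) =
      2 * (2 * t1 * t2 - t8 * t10) / (t8 * t10) := by
  subst hl1 hl2 hl3
  have h32 : t3 * t2 - t1 * t4 ≠ 0 := by rwa [← neg_sub, neg_ne_zero, mul_comm t3]
  field_simp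
  linear_combination 4 * t1 * t2 * hrel

theorem rosenhainC_eq (h2 : t2 ≠ 0) (h4 : t4 ≠ 0) (h8 : t8 ≠ 0) (h10 : t10 ≠ 0)
    (hl2 : l2 = t3 * t8 / (t4 * t10)) (hl3 : l3 = t1 * t8 / (t2 * t10)) :
    2 * (l3 + l2) / (l3 - l2) = 2 * (t1 * t4 + t2 * t3) / (t1 * t4 - t2 * t3) := by
  subst hl2 hl3
  field_simp

theorem rosenhainD_eq (h2 : t2 ≠ 0) (h4 : t4 ≠ 0) (h10 : t10 ≠ 0)
    (hl1 : l1 = t1 * t3 / (t2 * t4)) (hl2 : l2 = t3 * t8 / (t4 * t10))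
    (hl3 : l3 = t1 * t8 / (t2 * t10)) :
    4 * (l1 - l2 * l3) / ((l2 - l3) * (l1 - 1)) =
      4 * (t8 ^ 2 - t10 ^ 2) * (t1 * t2 * t3 * t4) /
        (t8 * t10 * (t1 * t4 - t2 * t3) * (t1 * t3 - t2 * t4)) := by
  subst hl1 hl2 hl3
  field_simp
  rw [← neg_sub (t8 ^ 2), ← neg_sub (t1 * t4)]
  simp only [mul_neg, neg_mul, neg_div_neg_eq]
  ring

end Rosenhain

end GoepelHudson

open GoepelHudson in
theorem goepel_hudson_moduli_rational_general (T1 T2 T3 T4 : ℂ)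
    (t1 t2 t3 t4 t8 t10 l1 l2 l3 A B C D : ℂ)
    (ht1 : t1 = T1 ^ 2 + T2 ^ 2 + T3 ^ 2 + T4 ^ 2)
    (ht2 : t2 = T1 ^ 2 + T2 ^ 2 - T3 ^ 2 - T4 ^ 2)
    (ht3 : t3 = T1 ^ 2 - T2 ^ 2 - T3 ^ 2 + T4 ^ 2)
    (ht4 : t4 = T1 ^ 2 - T2 ^ 2 + T3 ^ 2 - T4 ^ 2)
    (ht8 : t8 = 2 * (T1 * T2 + T3 * T4))
    (ht10 : t10 = 2 * (T1 * T2 - T3 * T4))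
    (h2 : t2 ≠ 0) (h4 : t4 ≠ 0) (h10 : t10 ≠ 0)
    (hl1 : l1 = t1 * t3 / (t2 * t4))
    (hl2 : l2 = t3 * t8 / (t4 * t10))
    (hl3 : l3 = t1 * t8 / (t2 * t10))
    (hl1ne : l1 ≠ 1) (hl23 : l2 ≠ l3)
    (hA : A = (T1 ^ 4 - T2 ^ 4 - T3 ^ 4 + T4 ^ 4) / (T1 ^ 2 * T4 ^ 2 - T2 ^ 2 * T3 ^ 2))
    (hB : B = (T1 ^ 4 + T2 ^ 4 - T3 ^ 4 - T4 ^ 4) / (T1 ^ 2 * T2 ^ 2 - T3 ^ 2 * T4 ^ 2))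
    (hC : C = (T1 ^ 4 - T2 ^ 4 + T3 ^ 4 - T4 ^ 4) / (T1 ^ 2 * T3 ^ 2 - T2 ^ 2 * T4 ^ 2))
    (hD : D = T1 * T2 * T3 * T4 *
        ((T1 ^ 2 + T2 ^ 2 + T3 ^ 2 + T4 ^ 2) * (T1 ^ 2 + T2 ^ 2 - T3 ^ 2 - T4 ^ 2) *
         (T1 ^ 2 - T2 ^ 2 + T3 ^ 2 - T4 ^ 2) * (T1 ^ 2 - T2 ^ 2 - T3 ^ 2 + T4 ^ 2)) /
      ((T1 ^ 2 * T2 ^ 2 - T3 ^ 2 * T4 ^ 2) * (T1 ^ 2 * T3 ^ 2 - T2 ^ 2 * T4 ^ 2) *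
       (T1 ^ 2 * T4 ^ 2 - T2 ^ 2 * T3 ^ 2))) :
    A = 2 * (l1 + 1) / (l1 - 1) ∧
    B = 2 * (l1 * l2 + l1 * l3 - 2 * l2 * l3 - 2 * l1 + l2 + l3) / ((l2 - l3) * (l1 - 1)) ∧
    C = 2 * (l3 + l2) / (l3 - l2) ∧
    D = 4 * (l1 - l2 * l3) / ((l2 - l3) * (l1 - 1)) := by
  obtain ⟨h8, h14⟩ := ne_zero_and_sub_ne_zero_of_rosenhain_ne h2 h4 h10 hl2 hl3 hl23
  have h13 := sub_ne_zero_of_rosenhain_ne_one h2 h4 hl1 hl1ne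
  have hrel := theta_quartic_relation ht1 ht2 ht3 ht4 ht8 ht10
  refine ⟨?_, ?_, ?_, ?_⟩
  · rw [hA, goepelHudsonA_eq ht1 ht2 ht3 ht4, rosenhainA_eq h2 h4 hl1]
  · rw [hB, goepelHudsonB_eq ht1 ht2 ht8 ht10,
      rosenhainB_eq h2 h4 h8 h10 h13 h14 hrel hl1 hl2 hl3]
  · rw [hC, goepelHudsonC_eq ht1 ht2 ht3 ht4, rosenhainC_eq h2 h4 h8 h10 hl2 hl3]
  · rw [hD, goepelHudsonD_eq ht1 ht2 ht3 ht4 ht8 ht10, rosenhainD_eq h2 h4 h10 hl1 hl2 hl3]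

/-- The Göpel–Hudson moduli A, B, C, D are rational functions of the Rosenhain moduli
λ₁, λ₂, λ₃. -/
theorem goepel_hudson_moduli_rational (T1 T2 T3 T4 : ℂ)
    (t1 t2 t3 t4 t8 t10 l1 l2 l3 A B C D : ℂ)
    (ht1 : t1 = T1 ^ 2 + T2 ^ 2 + T3 ^ 2 + T4 ^ 2)
    (ht2 : t2 = T1 ^ 2 + T2 ^ 2 - T3 ^ 2 - T4 ^ 2)
    (ht3 : t3 = T1 ^ 2 - T2 ^ 2 - T3 ^ 2 + T4 ^ 2)
    (ht4 : t4 = T1 ^ 2 - T2 ^ 2 + T3 ^ 2 - T4 ^ 2)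
    (ht8 : t8 = 2 * (T1 * T2 + T3 * T4))
    (ht10 : t10 = 2 * (T1 * T2 - T3 * T4))
    (h2 : t2 ≠ 0) (h4 : t4 ≠ 0) (h10 : t10 ≠ 0)
    (hd1 : T1 ^ 2 * T2 ^ 2 - T3 ^ 2 * T4 ^ 2 ≠ 0)
    (hd2 : T1 ^ 2 * T3 ^ 2 - T2 ^ 2 * T4 ^ 2 ≠ 0)
    (hd3 : T1 ^ 2 * T4 ^ 2 - T2 ^ 2 * T3 ^ 2 ≠ 0)
    (hl1 : l1 = t1 * t3 / (t2 * t4))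
    (hl2 : l2 = t3 * t8 / (t4 * t10))
    (hl3 : l3 = t1 * t8 / (t2 * t10))
    (hl1ne : l1 ≠ 1) (hl23 : l2 ≠ l3)
    (hA : A = (T1 ^ 4 - T2 ^ 4 - T3 ^ 4 + T4 ^ 4) / (T1 ^ 2 * T4 ^ 2 - T2 ^ 2 * T3 ^ 2))
    (hB : B = (T1 ^ 4 + T2 ^ 4 - T3 ^ 4 - T4 ^ 4) / (T1 ^ 2 * T2 ^ 2 - T3 ^ 2 * T4 ^ 2))
    (hC : C = (T1 ^ 4 - T2 ^ 4 + T3 ^ 4 - T4 ^ 4) / (T1 ^ 2 * T3 ^ 2 - T2 ^ 2 * T4 ^ 2))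
    (hD : D = T1 * T2 * T3 * T4 *
        ((T1 ^ 2 + T2 ^ 2 + T3 ^ 2 + T4 ^ 2) * (T1 ^ 2 + T2 ^ 2 - T3 ^ 2 - T4 ^ 2) *
         (T1 ^ 2 - T2 ^ 2 + T3 ^ 2 - T4 ^ 2) * (T1 ^ 2 - T2 ^ 2 - T3 ^ 2 + T4 ^ 2)) /
      ((T1 ^ 2 * T2 ^ 2 - T3 ^ 2 * T4 ^ 2) * (T1 ^ 2 * T3 ^ 2 - T2 ^ 2 * T4 ^ 2) *
       (T1 ^ 2 * T4 ^ 2 - T2 ^ 2 * T3 ^ 2))) :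
    A = 2 * (l1 + 1) / (l1 - 1) ∧
    B = 2 * (l1 * l2 + l1 * l3 - 2 * l2 * l3 - 2 * l1 + l2 + l3) / ((l2 - l3) * (l1 - 1)) ∧
    C = 2 * (l3 + l2) / (l3 - l2) ∧
    D = 4 * (l1 - l2 * l3) / ((l2 - l3) * (l1 - 1)) :=
  goepel_hudson_moduli_rational_general T1 T2 T3 T4 t1 t2 t3 t4 t8 t10 l1 l2 l3 A B C D ht1 ht2 ht3
    ht4 ht8 ht10 h2 h4 h10 hl1 hl2 hl3 hl1ne hl23 hA hB hC hD
end

section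
/- Let p₀, q₀, r₀, s₀, t₀, u₀ be complex numbers satisfying t₀²u₀² = p₀²q₀² − r₀²s₀² and t₀⁴ + u₀⁴ = p₀⁴ + q₀⁴ − r₀⁴ − s₀⁴, with p₀q₀r₀s₀t₀u₀ ≠ 0 and (p₀²r₀² − q₀²s₀²)(p₀²q₀² − r₀²s₀²)(p₀²s₀² − q₀²r₀²) ≠ 0. Suppose complex numbers w, x, y, z, X₁, X₂ satisfy the three quadrics: 2p₀q₀(X₁² + X₂²) = (p₀² + q₀²)(w² + x²) − (p₀² − q₀²)(y² + z²); 2r₀s₀(X₁² − X₂²) = (r₀² + s₀²)(w² − x²) + (r₀² − s₀²)(y² − z²); 4u₀t₀X₁X₂ = 2(t₀² + u₀²)wx − 2(t₀² − u₀²)yz. Then (w, x, y, z) satisfies the Göpel–Hudson quartic w⁴ + x⁴ + y⁴ + z⁴ + 2Dwxyz − A(w²z² + x²y²) − B(w²x² + y²z²) − C(w²y² + x²z²) = 0, where A = 2(p₀²r₀² + q₀²s₀²)/(p₀²r₀² − q₀²s₀²), B = 2(p₀²q₀² + r₀²s₀²)/(p₀²q₀² − r₀²s₀²), C = 2(p₀²s₀²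 + q₀²r₀²)/(p₀²s₀² − q₀²r₀²), and D = 4p₀²q₀²r₀²s₀²(t₀² − u₀²)(t₀² + u₀²)/((p₀²r₀² − q₀²s₀²)(p₀²q₀² − r₀²s₀²)(p₀²s₀² − q₀²r₀²)). -/
/-!
The three quadrics express fixed multiples of `X₁² + X₂²`, `X₁² - X₂²` and `X₁ X₂` as
quadratic forms in `w, x, y, z`, so the identity `(X₁² + X₂²)² - (X₁² - X₂²)² = 4 (X₁ X₂)²`
eliminates `X₁, X₂` and leaves a quartic in `w, x, y, z`. Modulo the two relations between the
parameters, in the form `(t² ± u²)² = (p² ± q²)² - (r² ± s²)²`, this quartic is the Göpel–Hudson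
quartic multiplied by its common denominator.
-/

theorem quadrics_elimination {R : Type*} [CommRing R] {a b c X₁ X₂ P Q S : R}
    (h₁ : a * (X₁ ^ 2 + X₂ ^ 2) = P) (h₂ : b * (X₁ ^ 2 - X₂ ^ 2) = Q) (h₃ : c * X₁ * X₂ = S) :
    (b * c * P) ^ 2 - (a * c * Q) ^ 2 = 4 * (a * b * S) ^ 2 := by
  rw [← h₁, ← h₂, ← h₃]
  ring

theorem barth_goepel_hudson_cleared {K : Type*} [Field K] [NeZero (2 : K)]
    {p q r s t u w x y z X₁ X₂ : K}
    (hrel1 : t ^ 2 * u ^ 2 = p ^ 2 * q ^ 2 - r ^ 2 * s ^ 2)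
    (hrel2 : t ^ 4 + u ^ 4 = p ^ 4 + q ^ 4 - r ^ 4 - s ^ 4)
    (hq1 : 2 * p * q * (X₁ ^ 2 + X₂ ^ 2) =
      (p ^ 2 + q ^ 2) * (w ^ 2 + x ^ 2) - (p ^ 2 - q ^ 2) * (y ^ 2 + z ^ 2))
    (hq2 : 2 * r * s * (X₁ ^ 2 - X₂ ^ 2) =
      (r ^ 2 + s ^ 2) * (w ^ 2 - x ^ 2) + (r ^ 2 - s ^ 2) * (y ^ 2 - z ^ 2))
    (hq3 : 4 * u * t * X₁ * X₂ = 2 * (t ^ 2 + u ^ 2) * w * x - 2 * (t ^ 2 - u ^ 2) * y * z) :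
    (p ^ 2 * r ^ 2 - q ^ 2 * s ^ 2) * (p ^ 2 * q ^ 2 - r ^ 2 * s ^ 2) *
        (p ^ 2 * s ^ 2 - q ^ 2 * r ^ 2) * (w ^ 4 + x ^ 4 + y ^ 4 + z ^ 4)
      + 8 * p ^ 2 * q ^ 2 * r ^ 2 * s ^ 2 * (t ^ 2 - u ^ 2) * (t ^ 2 + u ^ 2) * w * x * y * z
      - 2 * (p ^ 2 * r ^ 2 + q ^ 2 * s ^ 2) * (p ^ 2 * q ^ 2 - r ^ 2 * s ^ 2) *
        (p ^ 2 * s ^ 2 - q ^ 2 * r ^ 2) * (w ^ 2 * z ^ 2 + x ^ 2 * y ^ 2)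
      - 2 * (p ^ 2 * q ^ 2 + r ^ 2 * s ^ 2) * (p ^ 2 * r ^ 2 - q ^ 2 * s ^ 2) *
        (p ^ 2 * s ^ 2 - q ^ 2 * r ^ 2) * (w ^ 2 * x ^ 2 + y ^ 2 * z ^ 2)
      - 2 * (p ^ 2 * s ^ 2 + q ^ 2 * r ^ 2) * (p ^ 2 * r ^ 2 - q ^ 2 * s ^ 2) *
        (p ^ 2 * q ^ 2 - r ^ 2 * s ^ 2) * (w ^ 2 * y ^ 2 + x ^ 2 * z ^ 2) = 0 := by
  have hX := quadrics_elimination hq1 hq2 hq3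
  have hplus : (t ^ 2 + u ^ 2) ^ 2 = (p ^ 2 + q ^ 2) ^ 2 - (r ^ 2 + s ^ 2) ^ 2 := by
    linear_combination hrel2 + 2 * hrel1
  have hminus : (t ^ 2 - u ^ 2) ^ 2 = (p ^ 2 - q ^ 2) ^ 2 - (r ^ 2 - s ^ 2) ^ 2 := by
    linear_combination hrel2 - 2 * hrel1
  -- `2⁶` is the common factor that the coefficients `2pq, 2rs, 4ut` put into `hX`
  refine (mul_eq_zero.mp ?_).resolve_left (pow_ne_zero 6 (NeZero.ne (2 : K)))
  linear_combination hX
      + 64 * (p ^ 2 * q ^ 2 *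
          ((r ^ 2 + s ^ 2) * (w ^ 2 - x ^ 2) + (r ^ 2 - s ^ 2) * (y ^ 2 - z ^ 2)) ^ 2
        - r ^ 2 * s ^ 2 *
          ((p ^ 2 + q ^ 2) * (w ^ 2 + x ^ 2) - (p ^ 2 - q ^ 2) * (y ^ 2 + z ^ 2)) ^ 2) * hrel1
      + 256 * p ^ 2 * q ^ 2 * r ^ 2 * s ^ 2 * w ^ 2 * x ^ 2 * hplus
      + 256 * p ^ 2 * q ^ 2 * r ^ 2 * s ^ 2 * y ^ 2 * z ^ 2 * hminus

theorem barth_projects_to_goepel_hudson_general (p0 q0 r0 s0 t0 u0 : ℂ)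
    (hrel1 : t0 ^ 2 * u0 ^ 2 = p0 ^ 2 * q0 ^ 2 - r0 ^ 2 * s0 ^ 2)
    (hrel2 : t0 ^ 4 + u0 ^ 4 = p0 ^ 4 + q0 ^ 4 - r0 ^ 4 - s0 ^ 4)
    (hden : (p0 ^ 2 * r0 ^ 2 - q0 ^ 2 * s0 ^ 2) * (p0 ^ 2 * q0 ^ 2 - r0 ^ 2 * s0 ^ 2) *
      (p0 ^ 2 * s0 ^ 2 - q0 ^ 2 * r0 ^ 2) ≠ 0)
    (w x y z X1 X2 : ℂ)
    (hq1 : 2 * p0 * q0 * (X1 ^ 2 + X2 ^ 2) =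
      (p0 ^ 2 + q0 ^ 2) * (w ^ 2 + x ^ 2) - (p0 ^ 2 - q0 ^ 2) * (y ^ 2 + z ^ 2))
    (hq2 : 2 * r0 * s0 * (X1 ^ 2 - X2 ^ 2) =
      (r0 ^ 2 + s0 ^ 2) * (w ^ 2 - x ^ 2) + (r0 ^ 2 - s0 ^ 2) * (y ^ 2 - z ^ 2))
    (hq3 : 4 * u0 * t0 * X1 * X2 =
      2 * (t0 ^ 2 + u0 ^ 2) * w * x - 2 * (t0 ^ 2 - u0 ^ 2) * y * z)
    (A B C D : ℂ)
    (hA : A = 2 * (p0 ^ 2 * r0 ^ 2 + q0 ^ 2 * s0 ^ 2) / (p0 ^ 2 * r0 ^ 2 - q0 ^ 2 * s0 ^ 2))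
    (hB : B = 2 * (p0 ^ 2 * q0 ^ 2 + r0 ^ 2 * s0 ^ 2) / (p0 ^ 2 * q0 ^ 2 - r0 ^ 2 * s0 ^ 2))
    (hC : C = 2 * (p0 ^ 2 * s0 ^ 2 + q0 ^ 2 * r0 ^ 2) / (p0 ^ 2 * s0 ^ 2 - q0 ^ 2 * r0 ^ 2))
    (hD : D = 4 * (p0 ^ 2 * q0 ^ 2 * r0 ^ 2 * s0 ^ 2 * (t0 ^ 2 - u0 ^ 2) * (t0 ^ 2 + u0 ^ 2)) /
      ((p0 ^ 2 * r0 ^ 2 - q0 ^ 2 * s0 ^ 2) * (p0 ^ 2 * q0 ^ 2 - r0 ^ 2 * s0 ^ 2) *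
       (p0 ^ 2 * s0 ^ 2 - q0 ^ 2 * r0 ^ 2))) :
    w ^ 4 + x ^ 4 + y ^ 4 + z ^ 4 + 2 * D * w * x * y * z
      - A * (w ^ 2 * z ^ 2 + x ^ 2 * y ^ 2) - B * (w ^ 2 * x ^ 2 + y ^ 2 * z ^ 2)
      - C * (w ^ 2 * y ^ 2 + x ^ 2 * z ^ 2) = 0 := by
  have hE₁ : p0 ^ 2 * r0 ^ 2 - q0 ^ 2 * s0 ^ 2 ≠ 0 :=
    left_ne_zero_of_mul (left_ne_zero_of_mul hden)
  have hE₂ : p0 ^ 2 * q0 ^ 2 - r0 ^ 2 * s0 ^ 2 ≠ 0 :=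
    right_ne_zero_of_mul (left_ne_zero_of_mul hden)
  have hE₃ : p0 ^ 2 * s0 ^ 2 - q0 ^ 2 * r0 ^ 2 ≠ 0 := right_ne_zero_of_mul hden
  subst hA hB hC hD
  field_simp
  linear_combination barth_goepel_hudson_cleared hrel1 hrel2 hq1 hq2 hq3

/-- A point on the three quadrics of the Barth (1,2)-polarized Kummer variety projects to a
point of the Göpel–Hudson quartic. -/
theorem barth_projects_to_goepel_hudson (p0 q0 r0 s0 t0 u0 : ℂ)
    (hrel1 : t0 ^ 2 * u0 ^ 2 = p0 ^ 2 * q0 ^ 2 - r0 ^ 2 * s0 ^ 2)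
    (hrel2 : t0 ^ 4 + u0 ^ 4 = p0 ^ 4 + q0 ^ 4 - r0 ^ 4 - s0 ^ 4)
    (hnz : p0 * q0 * r0 * s0 * t0 * u0 ≠ 0)
    (hden : (p0 ^ 2 * r0 ^ 2 - q0 ^ 2 * s0 ^ 2) * (p0 ^ 2 * q0 ^ 2 - r0 ^ 2 * s0 ^ 2) *
      (p0 ^ 2 * s0 ^ 2 - q0 ^ 2 * r0 ^ 2) ≠ 0)
    (w x y z X1 X2 : ℂ)
    (hq1 : 2 * p0 * q0 * (X1 ^ 2 + X2 ^ 2) =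
      (p0 ^ 2 + q0 ^ 2) * (w ^ 2 + x ^ 2) - (p0 ^ 2 - q0 ^ 2) * (y ^ 2 + z ^ 2))
    (hq2 : 2 * r0 * s0 * (X1 ^ 2 - X2 ^ 2) =
      (r0 ^ 2 + s0 ^ 2) * (w ^ 2 - x ^ 2) + (r0 ^ 2 - s0 ^ 2) * (y ^ 2 - z ^ 2))
    (hq3 : 4 * u0 * t0 * X1 * X2 =
      2 * (t0 ^ 2 + u0 ^ 2) * w * x - 2 * (t0 ^ 2 - u0 ^ 2) * y * z)
    (A B C D : ℂ)
    (hA : A = 2 * (p0 ^ 2 * r0 ^ 2 + q0 ^ 2 * s0 ^ 2) / (p0 ^ 2 * r0 ^ 2 - q0 ^ 2 * s0 ^ 2))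
    (hB : B = 2 * (p0 ^ 2 * q0 ^ 2 + r0 ^ 2 * s0 ^ 2) / (p0 ^ 2 * q0 ^ 2 - r0 ^ 2 * s0 ^ 2))
    (hC : C = 2 * (p0 ^ 2 * s0 ^ 2 + q0 ^ 2 * r0 ^ 2) / (p0 ^ 2 * s0 ^ 2 - q0 ^ 2 * r0 ^ 2))
    (hD : D = 4 * (p0 ^ 2 * q0 ^ 2 * r0 ^ 2 * s0 ^ 2 * (t0 ^ 2 - u0 ^ 2) * (t0 ^ 2 + u0 ^ 2)) /
      ((p0 ^ 2 * r0 ^ 2 - q0 ^ 2 * s0 ^ 2) * (p0 ^ 2 * q0 ^ 2 - r0 ^ 2 * s0 ^ 2) *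
       (p0 ^ 2 * s0 ^ 2 - q0 ^ 2 * r0 ^ 2))) :
    w ^ 4 + x ^ 4 + y ^ 4 + z ^ 4 + 2 * D * w * x * y * z
      - A * (w ^ 2 * z ^ 2 + x ^ 2 * y ^ 2) - B * (w ^ 2 * x ^ 2 + y ^ 2 * z ^ 2)
      - C * (w ^ 2 * y ^ 2 + x ^ 2 * z ^ 2) = 0 :=
  barth_projects_to_goepel_hudson_general p0 q0 r0 s0 t0 u0 hrel1 hrel2 hden w x y z X1 X2 hq1 hq2
    hq3 A B C D hA hB hC hD
end
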